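/- arXiv:0802.0261 — 3 statements merged into one kernel-verified Lean document; each statement's English description precedes it below -/
import Mathlib

section
/- For every ρ > 0 and every real x ≥ 0, setting w = W_ρ(x) = (x·sinh ρ − 1)/(x + sinh ρ), one has w < x, and the geodesic γ(x, w) with ideal endpoints x and w is tangent to the hyperbolic disc B_ρ(i); that is, inf_{z ∈ γ(x,w)} dist(z, i) = ρ. -/
open UpperHalfPlane MeasureTheory

/-- The complete hyperbolic geodesic of the upper half-plane with ideal endpoints `a` and `b`:
the Euclidean semicircle `{z ∈ ℍ : |z − (a+b)/2| = |a−b|/2}`. -/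
noncomputable def geodesic (a b : ℝ) : Set ℍ :=
  {z : ℍ | ‖(z : ℂ) - (((a + b) / 2 : ℝ) : ℂ)‖ = |a - b| / 2}

/-- The geodesic `γ(a,b)` is tangent to the hyperbolic disc `B_ρ(i)`:
the infimum of the hyperbolic distance from points of the geodesic to `i` equals `ρ`. -/
def TangentToDisc (a b ρ : ℝ) : Prop :=
  sInf ((fun z : ℍ => dist z UpperHalfPlane.I) '' geodesic a b) = ρ

/-- The geodesic `γ(a,b)` intersects the closed hyperbolic disc `B̄_r(i)`. -/
def MeetsClosedDisc (a b r : ℝ) : Prop :=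
  ∃ z ∈ geodesic a b, dist z UpperHalfPlane.I ≤ r

/-!
`B̄_ρ(i)` is the Euclidean disc `|z|² + 1 ≤ 2 cosh ρ · Im z`, with centre `i cosh ρ` and radius
`sinh ρ`. Writing `c, r` for the centre and radius of `γ(a,b)` and `A = c² + r² + 1`, a point `z`
of the semicircle satisfies `|z|² + 1 = A + 2c (Re z - c)`, and Cauchy–Schwarz bounds
`2 cosh ρ · Im z - 2c (Re z - c)` by `2 r √(c² + cosh² ρ)`. So `γ(a,b)` stays outside `B_ρ(i)`
and touches its boundary when `A = 2 r √(c² + cosh² ρ)`, which unwinds to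
`(1 + ab)² = sinh² ρ (a - b)²`. For `b = W_ρ(x)` one has `1 + x W_ρ(x) = sinh ρ (x - W_ρ(x))`.
-/

namespace UpperHalfPlane

theorem cosh_dist_I (z : ℍ) :
    Real.cosh (dist z I) = (z.re ^ 2 + z.im ^ 2 + 1) / (2 * z.im) := by
  rw [cosh_dist']
  simp

theorem le_dist_I_iff {ρ : ℝ} (hρ : 0 ≤ ρ) (z : ℍ) :
    ρ ≤ dist z I ↔ 2 * Real.cosh ρ * z.im ≤ z.re ^ 2 + z.im ^ 2 + 1 := by
  rw [← abs_of_nonneg hρ, ← abs_of_nonneg (dist_nonneg (x := z) (y := I)), ← Real.cosh_le_cosh,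
    cosh_dist_I, le_div_iff₀ (by linarith [z.im_pos]), abs_of_nonneg hρ]
  ring_nf

theorem dist_I_eq_iff {ρ : ℝ} (hρ : 0 ≤ ρ) (z : ℍ) :
    dist z I = ρ ↔ z.re ^ 2 + z.im ^ 2 + 1 = 2 * Real.cosh ρ * z.im := by
  rw [← Real.cosh_injOn.eq_iff (Set.mem_Ici.2 dist_nonneg) (Set.mem_Ici.2 hρ), cosh_dist_I,
    div_eq_iff (by linarith [z.im_pos])]
  ring_nf

end UpperHalfPlane

theorem mem_geodesic_iff {a b : ℝ} {z : ℍ} :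
    z ∈ geodesic a b ↔ (z.re - (a + b) / 2) ^ 2 + z.im ^ 2 = ((a - b) / 2) ^ 2 := by
  rw [geodesic, Set.mem_ofPred_eq, ← sq_eq_sq₀ (norm_nonneg _) (by positivity), Complex.sq_norm,
    Complex.normSq_apply, div_pow, sq_abs]
  simp only [Complex.sub_re, Complex.sub_im, Complex.ofReal_re, Complex.ofReal_im, coe_re,
    coe_im, sub_zero]
  ring_nf

theorem isLeast_dist_I_image_circle {c r ρ : ℝ} (hρ : 0 ≤ ρ) (hr : r ≠ 0)
    (h : (c ^ 2 + r ^ 2 + 1) ^ 2 = 4 * (c ^ 2 + Real.cosh ρ ^ 2) * r ^ 2) :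
    IsLeast ((fun z : ℍ => dist z I) '' {z | (z.re - c) ^ 2 + z.im ^ 2 = r ^ 2}) ρ := by
  have hA : 0 < c ^ 2 + r ^ 2 + 1 := by positivity
  refine ⟨?_, ?_⟩
  · -- equality in Cauchy–Schwarz: `(Re z - c, Im z)` is a multiple of `(-c, cosh ρ)`
    refine ⟨⟨⟨c - c * (2 * r ^ 2 / (c ^ 2 + r ^ 2 + 1)),
      Real.cosh ρ * (2 * r ^ 2 / (c ^ 2 + r ^ 2 + 1))⟩, by positivity⟩, ?_, ?_⟩
    · simp only [Set.mem_ofPred_eq, re, im]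
      field_simp
      linear_combination (-r ^ 2) * h
    · rw [dist_I_eq_iff hρ]
      simp only [re, im]
      field_simp
      linear_combination (c ^ 2 + 1) * h
  · rintro _ ⟨z, hz, rfl⟩
    rw [Set.mem_ofPred_eq] at hz
    rw [le_dist_I_iff hρ]
    have hCS : (2 * Real.cosh ρ * z.im - 2 * c * (z.re - c)) ^ 2 ≤ (c ^ 2 + r ^ 2 + 1) ^ 2 := by
      rw [h, ← hz]
      nlinarith [sq_nonneg (2 * Real.cosh ρ * (z.re - c) + 2 * c * z.im)]
    linear_combination (abs_le_of_sq_le_sq' hCS hA.le).2 - hz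

theorem tangentToDisc_of_sq_eq {a b ρ : ℝ} (hρ : 0 ≤ ρ) (hab : a ≠ b)
    (h : (1 + a * b) ^ 2 = Real.sinh ρ ^ 2 * (a - b) ^ 2) : TangentToDisc a b ρ := by
  have hgeod : geodesic a b = {z | (z.re - (a + b) / 2) ^ 2 + z.im ^ 2 = ((a - b) / 2) ^ 2} :=
    Set.ext fun _ ↦ mem_geodesic_iff
  rw [TangentToDisc, hgeod]
  refine (isLeast_dist_I_image_circle hρ (by simpa [sub_eq_zero] using hab) ?_).csInf_eq
  linear_combination h - (a - b) ^ 2 * Real.cosh_sq ρ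

/-- For every ρ > 0 and every real x ≥ 0, setting w = W_ρ(x) = (x·sinh ρ − 1)/(x + sinh ρ),
one has w < x, and the geodesic γ(x, w) is tangent to the hyperbolic disc B_ρ(i). -/
theorem tangent_W (ρ : ℝ) (hρ : 0 < ρ) (x : ℝ) (hx : 0 ≤ x) :
    (x * Real.sinh ρ - 1) / (x + Real.sinh ρ) < x ∧
      TangentToDisc x ((x * Real.sinh ρ - 1) / (x + Real.sinh ρ)) ρ := by
  set s := Real.sinh ρ
  set w := (x * s - 1) / (x + s)
  have hxs : 0 < x + s := by positivity
  have hsub : x - w = (x ^ 2 + 1) / (x + s) := by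
    simp only [w]
    field_simp
    ring
  have hprod : 1 + x * w = s * (x - w) := by
    rw [hsub]
    simp only [w]
    field_simp
    ring
  have hwx : w < x := by
    rw [← sub_pos, hsub]
    positivity
  exact ⟨hwx, tangentToDisc_of_sq_eq hρ.le hwx.ne' (by rw [hprod]; ring)⟩
end

section
/- For every r > 0, every real x with 0 ≤ x < sinh r, and every real y with y ≠ x, the geodesic γ(x,y) with ideal endpoints x and y intersects the closed hyperbolic disc B̄_r(i) if and only if y ≤ W_r(x) or y ≥ U_r(x); in particular for such x the set of such y is the complement of the bounded open interval (W_r(x), U_r(x)). -/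
open UpperHalfPlane MeasureTheory

/-!
The closed hyperbolic disc `B̄_r(i)` is the Euclidean closed disc with centre `i cosh r` and radius
`sinh r`, and `γ(x,y)` is the upper half of the Euclidean circle with centre `c = (x+y)/2` and
radius `R = |x-y|/2`. Such a circle meets the disc iff `|d - R| ≤ sinh r`, `d` being the distance
between the centres; the point of the circle on the segment from `c` to `i cosh r` is a witness, and
it lies in `ℍ`. As `d² = c² + cosh² r = R² + xy + 1 + sinh² r`, the inequality `d ≤ R + sinh r` reads
`xy + 1 ≤ sinh r |x - y|`, while `R ≤ |c| + x ≤ d + sinh r` holds as soon as `0 ≤ x ≤ sinh r`.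
Solving `xy + 1 ≤ sinh r |x - y|` for `y` on either side of `x` gives `y ≤ W_r(x)` or `y ≥ U_r(x)`.
-/

section LineMap

variable {E : Type*} [NormedAddCommGroup E] [NormedSpace ℝ E] {c w : E} {R : ℝ}

theorem dist_lineMap_div_dist_left (hR : 0 ≤ R) (hcw : c ≠ w) :
    dist (AffineMap.lineMap c w (R / dist c w)) c = R := by
  rw [dist_lineMap_left, Real.norm_eq_abs, abs_of_nonneg (by positivity),
    div_mul_cancel₀ _ (dist_ne_zero.2 hcw)]

theorem dist_lineMap_div_dist_right (hcw : c ≠ w) :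
    dist (AffineMap.lineMap c w (R / dist c w)) w = |dist c w - R| := by
  have hd : 0 < dist c w := dist_pos.2 hcw
  calc dist (AffineMap.lineMap c w (R / dist c w)) w = |(1 - R / dist c w) * dist c w| := by
        rw [dist_lineMap_right, Real.norm_eq_abs, abs_mul, abs_of_pos hd]
    _ = |dist c w - R| := by rw [sub_mul, one_mul, div_mul_cancel₀ _ hd.ne']

end LineMap

namespace UpperHalfPlane

theorem mem_geodesic_iff {a b : ℝ} {z : ℍ} :
    z ∈ geodesic a b ↔ dist (z : ℂ) (((a + b) / 2 : ℝ) : ℂ) = |a - b| / 2 := by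
  rw [Complex.dist_eq]
  rfl

theorem dist_I_le_iff {z : ℍ} {r : ℝ} :
    dist z I ≤ r ↔ dist (z : ℂ) (I.center r) ≤ Real.sinh r := by
  rw [dist_le_iff_dist_coe_center_le, I_im, one_mul]

theorem im_lineMap_ofReal (a : ℝ) (w : ℂ) (t : ℝ) :
    (AffineMap.lineMap (a : ℂ) w t).im = t * w.im := by
  simp [AffineMap.lineMap_apply_module']

theorem dist_ofReal_I_center_sq (a r : ℝ) :
    dist (a : ℂ) (I.center r) ^ 2 = a ^ 2 + Real.cosh r ^ 2 := by
  simp [Complex.dist_eq, Complex.sq_norm, Complex.normSq_apply, center_re, center_im]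
  ring

theorem abs_le_dist_ofReal_I_center (a r : ℝ) : |a| ≤ dist (a : ℂ) (I.center r) := by
  simpa [Complex.dist_eq, center_re] using Complex.abs_re_le_norm ((a : ℂ) - I.center r)

theorem meetsClosedDisc_iff {x y r : ℝ} (hxy : x ≠ y) :
    MeetsClosedDisc x y r ↔
      |dist (((x + y) / 2 : ℝ) : ℂ) (I.center r) - |x - y| / 2| ≤ Real.sinh r := by
  set c : ℂ := (((x + y) / 2 : ℝ) : ℂ)
  set w : ℂ := (I.center r : ℂ)
  constructor
  · rintro ⟨z, hz, hzI⟩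
    rw [mem_geodesic_iff] at hz
    rw [dist_I_le_iff] at hzI
    have := abs_dist_sub_le w (z : ℂ) c
    rw [hz, dist_comm w, dist_comm w] at this
    exact this.trans hzI
  · intro h
    have hcw : c ≠ w := fun hcw => (I.center r).im_ne_zero (by
      simpa [c, w] using congrArg Complex.im hcw.symm)
    have hR : 0 < |x - y| / 2 := by positivity [sub_ne_zero.2 hxy]
    set z := AffineMap.lineMap c w ((|x - y| / 2) / dist c w)
    have hz : 0 < z.im := by
      rw [im_lineMap_ofReal]
      exact mul_pos (div_pos hR (dist_pos.2 hcw)) (I.center r).im_pos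
    refine ⟨⟨z, hz⟩, ?_, ?_⟩
    · exact mem_geodesic_iff.2 (dist_lineMap_div_dist_left hR.le hcw)
    · exact dist_I_le_iff.2 ((dist_lineMap_div_dist_right hcw).trans_le h)

theorem dist_le_half_abs_sub_add_sinh_iff {x y r : ℝ} (hs : 0 ≤ Real.sinh r) :
    dist (((x + y) / 2 : ℝ) : ℂ) (I.center r) ≤ |x - y| / 2 + Real.sinh r ↔
      x * y + 1 ≤ Real.sinh r * |x - y| := by
  rw [← sq_le_sq₀ dist_nonneg (by positivity), dist_ofReal_I_center_sq, Real.cosh_sq, add_sq]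
  simp only [div_pow, sq_abs]
  constructor <;> intro h <;> linarith

theorem half_abs_sub_le_dist_add_sinh {x y r : ℝ} (hx0 : 0 ≤ x) (hx : x ≤ Real.sinh r) :
    |x - y| / 2 ≤ dist (((x + y) / 2 : ℝ) : ℂ) (I.center r) + Real.sinh r := by
  have hc := abs_le_dist_ofReal_I_center ((x + y) / 2) r
  have hxy : |x - y| ≤ |x + y| + 2 * x :=
    abs_le.2 ⟨by linarith [le_abs_self (x + y)], by linarith [neg_le_abs (x + y)]⟩
  rw [abs_div, abs_two] at hc
  linarith

end UpperHalfPlane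

theorem mul_add_one_le_mul_sub_iff {x y s : ℝ} (hxs : 0 < x + s) :
    x * y + 1 ≤ s * (x - y) ↔ y ≤ (x * s - 1) / (x + s) := by
  rw [le_div_iff₀ hxs]
  constructor <;> intro h <;> linarith

theorem mul_add_one_le_mul_sub_iff' {x y s : ℝ} (hxs : 0 < -x + s) :
    x * y + 1 ≤ s * (y - x) ↔ (x * s + 1) / (-x + s) ≤ y := by
  rw [div_le_iff₀ hxs]
  constructor <;> intro h <;> linarith

theorem mul_sub_one_div_add_lt {x s : ℝ} (hxs : 0 < x + s) : (x * s - 1) / (x + s) < x := by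
  rw [div_lt_iff₀ hxs]
  nlinarith [sq_nonneg x]

theorem lt_mul_add_one_div_sub {x s : ℝ} (hxs : 0 < -x + s) : x < (x * s + 1) / (-x + s) := by
  rw [lt_div_iff₀ hxs]
  nlinarith [sq_nonneg x]

theorem mul_add_one_le_mul_abs_sub_iff {x y s : ℝ} (hx0 : 0 ≤ x) (hx : x < s) (hy : y ≠ x) :
    x * y + 1 ≤ s * |x - y| ↔ y ≤ (x * s - 1) / (x + s) ∨ (x * s + 1) / (-x + s) ≤ y := by
  have hW := mul_sub_one_div_add_lt (x := x) (s := s) (by linarith)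
  have hU := lt_mul_add_one_div_sub (x := x) (s := s) (by linarith)
  rcases hy.lt_or_gt with h | h
  · rw [abs_of_pos (sub_pos.2 h), mul_add_one_le_mul_sub_iff (by linarith)]
    exact (or_iff_left (by linarith)).symm
  · rw [abs_sub_comm, abs_of_pos (sub_pos.2 h), mul_add_one_le_mul_sub_iff' (by linarith)]
    exact (or_iff_right (by linarith)).symm

theorem meets_iff_of_lt_sinh_general (r : ℝ) (x : ℝ) (hx0 : 0 ≤ x)
    (hx : x < Real.sinh r) (y : ℝ) (hy : y ≠ x) :
    MeetsClosedDisc x y r ↔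
      y ≤ (x * Real.sinh r - 1) / (x + Real.sinh r) ∨
        (x * Real.sinh r + 1) / (-x + Real.sinh r) ≤ y := by
  rw [meetsClosedDisc_iff hy.symm, abs_sub_le_iff, sub_le_iff_le_add', sub_le_iff_le_add',
    and_iff_left (half_abs_sub_le_dist_add_sinh hx0 hx.le),
    dist_le_half_abs_sub_add_sinh_iff (by linarith)]
  exact mul_add_one_le_mul_abs_sub_iff hx0 hx hy

/-- For every r > 0, every real x with 0 ≤ x < sinh r, and every real y ≠ x, the geodesic
γ(x,y) intersects the closed disc B̄_r(i) iff y ≤ W_r(x) or y ≥ U_r(x). -/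
theorem meets_iff_of_lt_sinh (r : ℝ) (hr : 0 < r) (x : ℝ) (hx0 : 0 ≤ x)
    (hx : x < Real.sinh r) (y : ℝ) (hy : y ≠ x) :
    MeetsClosedDisc x y r ↔
      y ≤ (x * Real.sinh r - 1) / (x + Real.sinh r) ∨
        (x * Real.sinh r + 1) / (-x + Real.sinh r) ≤ y :=
  meets_iff_of_lt_sinh_general r x hx0 hx y hy
end

section
/- For every r > 0, writing s = sinh r, W_r(x) = (x·s − 1)/(x + s) and U_r(x) = (x·s + 1)/(−x + s), one has ∫_0^{s} ( ∫_{−∞}^{W_r(x)} (x − y)^{−2} dy + ∫_{U_r(x)}^{∞} (x − y)^{−2} dy ) dx + ∫_{s}^{∞} ∫_{U_r(x)}^{W_r(x)} (x − y)^{−2} dy dx = π·sinh r. -/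
/-!
Since `y ↦ (x - y)⁻¹` is an antiderivative of `y ↦ (x - y)⁻²`, every inner integral is a
difference of reciprocals of distances from `x` to the endpoints. With `s = sinh r` one has
`x - W_r(x) = (1 + x²)/(x + s)` and `U_r(x) - x = (1 + x²)/(s - x)`, so on both ranges of `x`
the inner expression equals `2s/(1 + x²)`, and the total is `2s ∫₀^∞ dx/(1 + x²) = π s`.
-/

open MeasureTheory Set Filter Topology

theorem hasDerivAt_inv_sub {x y : ℝ} (h : y ≠ x) :
    HasDerivAt (fun y => (x - y)⁻¹) ((x - y) ^ 2)⁻¹ y := by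
  have hxy : x - y ≠ 0 := sub_ne_zero.mpr h.symm
  exact ((hasDerivAt_inv hxy).comp y ((hasDerivAt_id y).const_sub x)).congr_deriv (by ring)

theorem integral_Ioi_inv_sub_sq {x c : ℝ} (h : x < c) :
    ∫ y in Ioi c, ((x - y) ^ 2)⁻¹ = (c - x)⁻¹ := by
  have hlim : Tendsto (fun y => (x - y)⁻¹) atTop (𝓝 0) :=
    tendsto_inv_atBot_zero.comp (tendsto_atBot_add_const_left _ x tendsto_neg_atTop_atBot)
  rw [integral_Ioi_of_hasDerivAt_of_nonneg'
    (fun y hy => hasDerivAt_inv_sub (ne_of_gt (h.trans_le hy))) (fun _ _ => by positivity) hlim,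
    zero_sub, ← inv_neg, neg_sub]

theorem integral_Iio_inv_sub_sq {x a : ℝ} (h : a < x) :
    ∫ y in Iio a, ((x - y) ^ 2)⁻¹ = (x - a)⁻¹ := by
  -- the `Ioi` case at the point `-x`, after the reflection `y ↦ -y`
  have := integral_comp_neg_Iic a (fun y => ((-x - y) ^ 2)⁻¹)
  rw [integral_Ioi_inv_sub_sq (neg_lt_neg h), sub_neg_eq_add, neg_add_eq_sub] at this
  rw [setIntegral_congr_set Iio_ae_eq_Iic, ← this]
  congr with y
  ring_nf

theorem intervalIntegral.integral_inv_sub_sq {x a b : ℝ} (ha : a < x) (hb : b < x) :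
    ∫ y in a..b, ((x - y) ^ 2)⁻¹ = (x - b)⁻¹ - (x - a)⁻¹ := by
  have hlt : ∀ y ∈ uIcc a b, y < x := fun y hy => hy.2.trans_lt (max_lt ha hb)
  refine intervalIntegral.integral_eq_sub_of_hasDerivAt
    (fun y hy => hasDerivAt_inv_sub (hlt y hy).ne) (ContinuousOn.intervalIntegrable ?_)
  exact ContinuousOn.inv₀ (by fun_prop) fun y hy => pow_ne_zero 2 (sub_ne_zero.mpr (hlt y hy).ne')

theorem sub_mul_sub_one_div_add {x s : ℝ} (h : x + s ≠ 0) :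
    x - (x * s - 1) / (x + s) = (1 + x ^ 2) / (x + s) := by
  field_simp
  ring

theorem mul_add_one_div_neg_add_sub {x s : ℝ} (h : -x + s ≠ 0) :
    (x * s + 1) / (-x + s) - x = (1 + x ^ 2) / (-x + s) := by
  field_simp
  ring

theorem integral_Iio_add_integral_Ioi_of_abs_lt {x s : ℝ} (h : |x| < s) :
    (∫ y in Iio ((x * s - 1) / (x + s)), ((x - y) ^ 2)⁻¹) +
        ∫ y in Ioi ((x * s + 1) / (-x + s)), ((x - y) ^ 2)⁻¹ = 2 * s * (1 + x ^ 2)⁻¹ := by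
  obtain ⟨hxs, hsx⟩ := abs_lt.mp h
  have hp : 0 < x + s := by linarith
  have hm : 0 < -x + s := by linarith
  have hW := sub_mul_sub_one_div_add hp.ne'
  have hU := mul_add_one_div_neg_add_sub hm.ne'
  rw [integral_Iio_inv_sub_sq (sub_pos.mp (hW ▸ by positivity)),
    integral_Ioi_inv_sub_sq (sub_pos.mp (hU ▸ by positivity)), hW, hU, inv_div, inv_div]
  field_simp
  ring

theorem intervalIntegral.integral_inv_sub_sq_of_abs_lt {x s : ℝ} (h : |s| < x) :
    ∫ y in ((x * s + 1) / (-x + s))..((x * s - 1) / (x + s)), ((x - y) ^ 2)⁻¹ =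
      2 * s * (1 + x ^ 2)⁻¹ := by
  obtain ⟨hsx, hxs⟩ := abs_lt.mp h
  have hp : 0 < x + s := by linarith
  have hm : -x + s < 0 := by linarith
  have hW := sub_mul_sub_one_div_add hp.ne'
  have hU : x - (x * s + 1) / (-x + s) = (1 + x ^ 2) / (x - s) := by
    rw [← neg_sub, mul_add_one_div_neg_add_sub hm.ne, ← div_neg]
    ring_nf
  have hs : 0 < x - s := by linarith
  rw [intervalIntegral.integral_inv_sub_sq (sub_pos.mp (hU ▸ by positivity))
    (sub_pos.mp (hW ▸ by positivity)), hW, hU, inv_div, inv_div]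
  field_simp
  ring

/-- For every r > 0, with s = sinh r, W_r(x) = (x·s − 1)/(x + s) and
U_r(x) = (x·s + 1)/(−x + s), one has
∫₀^s (∫_{−∞}^{W_r(x)} (x−y)⁻² dy + ∫_{U_r(x)}^∞ (x−y)⁻² dy) dx
  + ∫_s^∞ ∫_{U_r(x)}^{W_r(x)} (x−y)⁻² dy dx = π·sinh r. -/
theorem integral_sum_eq_pi_sinh (r : ℝ) (hr : 0 < r) :
    (∫ x in (0:ℝ)..Real.sinh r,
        ((∫ y in Set.Iio ((x * Real.sinh r - 1) / (x + Real.sinh r)), ((x - y) ^ 2)⁻¹) +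
          ∫ y in Set.Ioi ((x * Real.sinh r + 1) / (-x + Real.sinh r)), ((x - y) ^ 2)⁻¹)) +
      (∫ x in Set.Ioi (Real.sinh r),
        ∫ y in ((x * Real.sinh r + 1) / (-x + Real.sinh r))..
            ((x * Real.sinh r - 1) / (x + Real.sinh r)), ((x - y) ^ 2)⁻¹) =
      Real.pi * Real.sinh r := by
  have hs : 0 < Real.sinh r := Real.sinh_pos_iff.mpr hr
  have hf : Integrable fun x : ℝ => 2 * Real.sinh r * (1 + x ^ 2)⁻¹ :=
    integrable_inv_one_add_sq.const_mul _
  rw [intervalIntegral.integral_congr_Ioo_of_le hs.le fun x hx =>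
      integral_Iio_add_integral_Ioi_of_abs_lt ((abs_of_pos hx.1).trans_lt hx.2),
    setIntegral_congr_fun measurableSet_Ioi fun x hx =>
      intervalIntegral.integral_inv_sub_sq_of_abs_lt ((abs_of_pos hs).trans_lt hx),
    intervalIntegral.integral_interval_add_Ioi hf.integrableOn hf.integrableOn,
    integral_const_mul, integral_Ioi_inv_one_add_sq, Real.arctan_zero]
  ring
end
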